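/- arXiv:2410.20832 — 2 statements merged into one kernel-verified Lean document; each statement's English description precedes it below -/
import Mathlib

section
/- Let H be a {K4^{3-}, F5}-free 3-graph and S ⊆ V(H) a vertex set. Then for every vertex v ∈ V(H), the number of pairs in the link of v that lie entirely inside S satisfies |L_H(v, S)| ≥ |L_H(v)| − α(H)·|V(H) \ S|. -/
open Finset

section Defs

variable {V : Type*} [DecidableEq V]

/-- The degree of a vertex `v` in the 3-graph `H`: the number of edges containing `v`. -/
def degH (H : Finset (Finset V)) (v : V) : ℕ :=
  (H.filter fun e => v ∈ e).card

/-- `H` contains a copy of the generalized triangle `F₅ = {abc, abd, cde}`. -/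
def HasF5 (H : Finset (Finset V)) : Prop :=
  ∃ a b c d e : V,
    a ≠ b ∧ a ≠ c ∧ a ≠ d ∧ a ≠ e ∧ b ≠ c ∧ b ≠ d ∧ b ≠ e ∧ c ≠ d ∧ c ≠ e ∧ d ≠ e ∧
    ({a, b, c} : Finset V) ∈ H ∧ ({a, b, d} : Finset V) ∈ H ∧ ({c, d, e} : Finset V) ∈ H

/-- `H` contains a copy of `K₄³⁻ = {abc, abd, acd}`. -/
def HasK43m (H : Finset (Finset V)) : Prop :=
  ∃ a b c d : V,
    a ≠ b ∧ a ≠ c ∧ a ≠ d ∧ b ≠ c ∧ b ≠ d ∧ c ≠ d ∧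
    ({a, b, c} : Finset V) ∈ H ∧ ({a, b, d} : Finset V) ∈ H ∧ ({a, c, d} : Finset V) ∈ H

/-- `H` is 3-partite: the vertex set can be partitioned into three parts so that every
edge has at most one vertex in each part. -/
def Tripartite (H : Finset (Finset V)) : Prop :=
  ∃ P : V → Fin 3, ∀ e ∈ H, ∀ u ∈ e, ∀ v ∈ e, u ≠ v → P u ≠ P v

/-- The shadow graph `∂H` of the 3-graph `H`: two distinct vertices are adjacent iff
they lie in a common edge of `H`. -/
def shadowG (H : Finset (Finset V)) : SimpleGraph V where
  Adj u v := u ≠ v ∧ ∃ e ∈ H, u ∈ e ∧ v ∈ e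
  symm := by
    constructor
    rintro u v ⟨hne, e, he, hu, hv⟩
    exact ⟨hne.symm, e, he, hv, hu⟩
  loopless := by constructor; rintro u ⟨hne, -⟩; exact hne rfl

end Defs

section LinkDefs

variable {V : Type*} [DecidableEq V]

/-- The link of a vertex `v` in the 3-graph `H`: all pairs `e` with `e ∪ {v} ∈ H`. -/
def link (H : Finset (Finset V)) (v : V) : Finset (Finset V) :=
  (H.filter fun e => v ∈ e).image fun e => e.erase v

/-- The pairs in the link of `v` that lie entirely inside `S`. -/
def linkIn (H : Finset (Finset V)) (v : V) (S : Finset V) : Finset (Finset V) :=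
  (link H v).filter fun p => p ⊆ S

/-- A set `I` is independent in `H` if every edge meets it in at most one vertex. -/
def IsIndep (H : Finset (Finset V)) (I : Finset V) : Prop :=
  ∀ e ∈ H, (e ∩ I).card ≤ 1

instance (H : Finset (Finset V)) (I : Finset V) : Decidable (IsIndep H I) := by
  unfold IsIndep; infer_instance

/-- The independence number `α(H)`: the maximum size of an independent set. -/
def indepNum [Fintype V] (H : Finset (Finset V)) : ℕ :=
  ((Finset.univ : Finset (Finset V)).filter fun I => IsIndep H I).sup Finset.card

end LinkDefs

/-!
A pair of `L(v)` not inside `S` contains some `u ∉ S`, and the pairs of `L(v)` through `u` are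
the `uw` with `w` in the common neighbourhood of `v` and `u`. That neighbourhood is independent
in a `{K₄³⁻, F₅}`-free 3-graph, so at most `α(H)·|V \ S|` pairs of `L(v)` leave `S`.
-/

namespace Finset

variable {α : Type*} [DecidableEq α]

lemma ne_of_card_eq_three {a b c : α} (h : #({a, b, c} : Finset α) = 3) :
    a ≠ b ∧ a ≠ c ∧ b ≠ c := by
  refine ⟨?_, ?_, ?_⟩ <;> rintro rfl <;> simp at h <;>
    exact absurd h (card_le_two.trans_lt (by norm_num)).ne

lemma exists_eq_triple_of_card_eq_three {e : Finset α} {a b : α} (h : #e = 3) (ha : a ∈ e)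
    (hb : b ∈ e) (hab : a ≠ b) : ∃ x, x ≠ a ∧ x ≠ b ∧ e = {a, b, x} := by
  have hb' : b ∈ e.erase a := mem_erase.2 ⟨hab.symm, hb⟩
  obtain ⟨x, hx⟩ : ∃ x, (e.erase a).erase b = {x} := by
    rw [← card_eq_one, card_erase_of_mem hb', card_erase_of_mem ha, h]
  have hx' : x ∈ (e.erase a).erase b := hx ▸ mem_singleton_self x
  refine ⟨x, ne_of_mem_erase (mem_of_mem_erase hx'), ne_of_mem_erase hx', ?_⟩
  rw [← hx, insert_erase hb', insert_erase ha]

lemma card_filter_not_subset_le_sum [Fintype α] (F : Finset (Finset α)) (S : Finset α) :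
    #(F.filter fun p => ¬ p ⊆ S) ≤ ∑ u ∈ univ \ S, #(F.filter fun p => u ∈ p) := by
  refine (card_le_card fun p hp => ?_).trans card_biUnion_le
  obtain ⟨hpF, hpS⟩ := mem_filter.1 hp
  obtain ⟨u, hup, huS⟩ := not_subset.1 hpS
  exact mem_biUnion.2 ⟨u, by simpa using huS, mem_filter.2 ⟨hpF, hup⟩⟩

end Finset

section CommonNbhd

variable {V : Type*} [Fintype V] [DecidableEq V] {H : Finset (Finset V)}

lemma card_le_indepNum {I : Finset V} (hI : IsIndep H I) : #I ≤ indepNum H :=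
  le_sup (f := card) (mem_filter.2 ⟨mem_univ I, hI⟩)

def commonNbhd (H : Finset (Finset V)) (v u : V) : Finset V :=
  univ.filter fun w => ({v, u, w} : Finset V) ∈ H

/-- Two vertices `w₁, w₂ ∈ N(v, u)` lying in an edge `w₁w₂x` would give a `K₄³⁻` when
`x ∈ {v, u}` and an `F₅` otherwise. -/
lemma isIndep_commonNbhd (h3 : ∀ e ∈ H, #e = 3) (hK : ¬ HasK43m H) (hF5 : ¬ HasF5 H)
    (v u : V) : IsIndep H (commonNbhd H v u) := by
  intro e he
  by_contra! hcon
  obtain ⟨w₁, hw₁, w₂, hw₂, hw₁₂⟩ := one_lt_card.1 hcon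
  simp only [commonNbhd, mem_inter, mem_filter, mem_univ, true_and] at hw₁ hw₂
  obtain ⟨hw₁e, hw₁H⟩ := hw₁
  obtain ⟨hw₂e, hw₂H⟩ := hw₂
  obtain ⟨hvu, hvw₁, huw₁⟩ := ne_of_card_eq_three (h3 _ hw₁H)
  obtain ⟨-, hvw₂, huw₂⟩ := ne_of_card_eq_three (h3 _ hw₂H)
  obtain ⟨x, hxw₁, hxw₂, rfl⟩ := exists_eq_triple_of_card_eq_three (h3 e he) hw₁e hw₂e hw₁₂
  by_cases hxv : x = v
  · subst hxv
    refine hK ⟨x, u, w₁, w₂, hvu, hvw₁, hvw₂, huw₁, huw₂, hw₁₂, hw₁H, hw₂H, ?_⟩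
    rwa [insert_comm, pair_comm]
  by_cases hxu : x = u
  · subst hxu
    refine hK ⟨x, v, w₁, w₂, hvu.symm, huw₁, huw₂, hvw₁, hvw₂, hw₁₂, ?_, ?_, ?_⟩
    · rwa [insert_comm]
    · rwa [insert_comm]
    · rwa [insert_comm, pair_comm]
  exact hF5 ⟨v, u, w₁, w₂, x, hvu, hvw₁, hvw₂, Ne.symm hxv, huw₁, huw₂, Ne.symm hxu, hw₁₂,
    Ne.symm hxw₁, Ne.symm hxw₂, hw₁H, hw₂H, he⟩

lemma filter_mem_link_subset_image_commonNbhd (h3 : ∀ e ∈ H, #e = 3) (v u : V) :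
    (link H v).filter (fun p => u ∈ p) ⊆ (commonNbhd H v u).image fun w => {u, w} := by
  intro p hp
  obtain ⟨hpl, hup⟩ := mem_filter.1 hp
  obtain ⟨e, he, rfl⟩ := mem_image.1 hpl
  obtain ⟨heH, hve⟩ := mem_filter.1 he
  have hvu : v ≠ u := (ne_of_mem_erase hup).symm
  obtain ⟨w, hwv, -, hew⟩ :=
    exists_eq_triple_of_card_eq_three (h3 e heH) hve (mem_of_mem_erase hup) hvu
  have hp : e.erase v = {u, w} := by
    rw [hew, erase_insert (by simp [hvu, hwv.symm])]
  exact mem_image.2 ⟨w, by simpa [commonNbhd, ← hew] using heH, hp.symm⟩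

lemma card_filter_mem_link_le_indepNum (h3 : ∀ e ∈ H, #e = 3) (hK : ¬ HasK43m H)
    (hF5 : ¬ HasF5 H) (v u : V) : #((link H v).filter fun p => u ∈ p) ≤ indepNum H :=
  calc #((link H v).filter fun p => u ∈ p)
      ≤ #((commonNbhd H v u).image fun w => {u, w}) :=
        card_le_card (filter_mem_link_subset_image_commonNbhd h3 v u)
    _ ≤ #(commonNbhd H v u) := card_image_le
    _ ≤ indepNum H := card_le_indepNum (isIndep_commonNbhd h3 hK hF5 v u)

end CommonNbhd

/-- For a `{K₄³⁻, F₅}`-free 3-graph `H`, a vertex set `S` and any vertex `v`,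
`|L_H(v, S)| ≥ |L_H(v)| - α(H)·|V(H) \ S|`. -/
theorem link_in_S_lower_bound (V : Type*) [Fintype V] [DecidableEq V]
    (H : Finset (Finset V)) (h3 : ∀ e ∈ H, e.card = 3)
    (hK : ¬ HasK43m H) (hF5 : ¬ HasF5 H)
    (S : Finset V) (v : V) :
    ((link H v).card : ℤ) - (indepNum H : ℤ) * ((Finset.univ \ S).card : ℤ)
      ≤ ((linkIn H v S).card : ℤ) := by
  have hout : #((link H v).filter fun p => ¬ p ⊆ S) ≤ indepNum H * #(univ \ S) :=
    calc #((link H v).filter fun p => ¬ p ⊆ S)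
        ≤ ∑ u ∈ univ \ S, #((link H v).filter fun p => u ∈ p) :=
          card_filter_not_subset_le_sum _ S
      _ ≤ ∑ _u ∈ univ \ S, indepNum H :=
          sum_le_sum fun u _ => card_filter_mem_link_le_indepNum h3 hK hF5 v u
      _ = indepNum H * #(univ \ S) := by rw [sum_const, smul_eq_mul, mul_comm]
  have hsplit := card_filter_add_card_filter_not (s := link H v) (fun p => p ⊆ S)
  rw [linkIn]
  omega
end

section
/- For every integer d ≥ 1, the graph Γ_d on vertex set [3d−1] is d-regular, and for every integer i with 1 ≤ i ≤ d, Γ_i is a subgraph of Γ_d (on the respective vertex sets, Γ_i embeds into Γ_d as a subgraph). -/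
open Finset

/-- The Andrásfai-type graph `Γ_d` on vertex set `Fin (3d - 1)`: `i` and `j` are
adjacent iff `j - i ≡ ±s (mod 3d - 1)` for some `s ∈ {1, 4, 7, …, 3⌈d/2⌉ - 2}`,
i.e. `s = 3k + 1` with `0 ≤ k < ⌈d/2⌉`. -/
def Gamma (d : ℕ) : SimpleGraph (Fin (3 * d - 1)) where
  Adj i j := i ≠ j ∧ ∃ k : ℕ, k < (d + 1) / 2 ∧
    (((i : ℕ) + (3 * k + 1)) % (3 * d - 1) = (j : ℕ) ∨
     ((j : ℕ) + (3 * k + 1)) % (3 * d - 1) = (i : ℕ))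
  symm := by
    refine ⟨?_⟩
    rintro i j ⟨hne, k, hk, h⟩
    exact ⟨hne.symm, k, hk, h.symm⟩
  loopless := by refine ⟨?_⟩; rintro i ⟨hne, -⟩; exact hne rfl

noncomputable instance (d : ℕ) : DecidableRel (Gamma d).Adj :=
  fun _ _ => Classical.dec _

/-!
Modulo `3d - 1 ≡ 2 (mod 3)`, the steps `±(3k + 1)` with `k < ⌈d/2⌉` are exactly the residues
`≡ 1 (mod 3)`, so `Γ_d` is the circulant graph with this connection set, which has `d` elements.
For `a < b` the residues of `b - a` and `a - b` are `b - a` and `3d - 1 - (b - a) ≡ 2 - (b - a)`,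
so `a ~ b` iff `b - a ≡ 1 (mod 3)`. This does not depend on `d`, hence `Γ_i` is the subgraph of
`Γ_d` induced on its first `3i - 1` vertices.
-/

theorem Fin.val_add_mod_eq_iff_val_sub_eq {n s : ℕ} (a b : Fin n) (hs : s < n) :
    ((a : ℕ) + s) % n = b ↔ ((b - a : Fin n) : ℕ) = s := by
  have : NeZero n := ⟨by omega⟩
  calc ((a : ℕ) + s) % n = b ↔ a + ⟨s, hs⟩ = b := by rw [Fin.ext_iff, Fin.val_add]
    _ ↔ ⟨s, hs⟩ = b - a := eq_sub_iff_add_eq'.symm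
    _ ↔ ((b - a : Fin n) : ℕ) = s := by rw [Fin.ext_iff, eq_comm]

theorem Fin.val_sub_add_val_sub_of_ne {n : ℕ} {a b : Fin n} (h : a ≠ b) :
    ((a - b : Fin n) : ℕ) + ((b - a : Fin n) : ℕ) = n := by
  rcases h.lt_or_gt with h | h <;>
  · rw [Fin.coe_sub_iff_lt.2 h, Fin.sub_val_of_le h.le]
    omega

/-- With `y = 3d - 1 - x`, this says that the steps `±(3k + 1)`, `k < ⌈d/2⌉`, of `Γ_d` are
exactly the residues modulo `3d - 1` that are `≡ 1 (mod 3)`. -/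
theorem mod_three_eq_one_iff_of_add_eq {d x y : ℕ} (hxy : x + y = 3 * d - 1) :
    x % 3 = 1 ↔ ∃ k < (d + 1) / 2, x = 3 * k + 1 ∨ y = 3 * k + 1 := by
  constructor
  · intro h
    by_cases hsmall : x / 3 < (d + 1) / 2
    · exact ⟨x / 3, hsmall, Or.inl (by omega)⟩
    · exact ⟨d - 1 - x / 3, by omega, Or.inr (by omega)⟩
  · rintro ⟨k, -, h | h⟩ <;> omega

theorem Fin.card_filter_val_eq_count {n : ℕ} (p : ℕ → Prop) [DecidablePred p] :
    #{x : Fin n | p x} = Nat.count p n := by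
  rw [Nat.count_eq_card_filter_range, ← Nat.Iio_eq_range, ← Fin.map_valEmbedding_univ,
    filter_map, card_map]
  rfl

namespace Gamma

theorem adj_iff_val_sub_mod_three {d : ℕ} (i j : Fin (3 * d - 1)) :
    (Gamma d).Adj i j ↔ ((j - i : Fin _) : ℕ) % 3 = 1 := by
  have hstep {k : ℕ} (hk : k < (d + 1) / 2) : 3 * k + 1 < 3 * d - 1 := by omega
  constructor
  · rintro ⟨hne, k, hk, h⟩
    rw [Fin.val_add_mod_eq_iff_val_sub_eq _ _ (hstep hk),
      Fin.val_add_mod_eq_iff_val_sub_eq _ _ (hstep hk)] at h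
    exact (mod_three_eq_one_iff_of_add_eq (Fin.val_sub_add_val_sub_of_ne hne.symm)).2 ⟨k, hk, h⟩
  · intro h
    have hne : i ≠ j := by
      rintro rfl
      rw [Fin.sub_val_of_le le_rfl, Nat.sub_self] at h
      omega
    obtain ⟨k, hk, h⟩ :=
      (mod_three_eq_one_iff_of_add_eq (Fin.val_sub_add_val_sub_of_ne hne.symm)).1 h
    refine ⟨hne, k, hk, ?_⟩
    rwa [Fin.val_add_mod_eq_iff_val_sub_eq _ _ (hstep hk),
      Fin.val_add_mod_eq_iff_val_sub_eq _ _ (hstep hk)]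

def oneModThreeGraph : SimpleGraph ℕ :=
  SimpleGraph.fromRel fun a b => a < b ∧ (b - a) % 3 = 1

theorem eq_comap_val (d : ℕ) : Gamma d = oneModThreeGraph.comap Fin.val := by
  ext i j
  rw [adj_iff_val_sub_mod_three, SimpleGraph.comap_adj, oneModThreeGraph,
    SimpleGraph.fromRel_adj, Ne, Fin.val_inj]
  rcases lt_trichotomy i j with h | rfl | h
  · rw [Fin.sub_val_of_le h.le]
    omega
  · rw [Fin.sub_val_of_le le_rfl]
    omega
  · rw [Fin.coe_sub_iff_lt.2 h]
    omega

theorem eq_comap_castLE {i d : ℕ} (h : 3 * i - 1 ≤ 3 * d - 1) :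
    Gamma i = (Gamma d).comap (Fin.castLE h) := by
  rw [eq_comap_val, eq_comap_val, SimpleGraph.comap_comap]
  rfl

theorem card_neighborFinset {d : ℕ} (v : Fin (3 * d - 1)) :
    ((Gamma d).neighborFinset v).card = d := by
  have : NeZero (3 * d - 1) := ⟨(Fin.pos v).ne'⟩
  calc ((Gamma d).neighborFinset v).card
      = #{u : Fin (3 * d - 1) | ((u - v : Fin _) : ℕ) % 3 = 1} := by
        rw [SimpleGraph.neighborFinset_eq_filter]
        simp only [adj_iff_val_sub_mod_three]
    _ = #{x : Fin (3 * d - 1) | (x : ℕ) ≡ 1 [MOD 3]} :=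
        card_equiv (Equiv.subRight v) (by simp [Nat.ModEq])
    _ = Nat.count (· ≡ 1 [MOD 3]) (3 * d - 1) := Fin.card_filter_val_eq_count (· ≡ 1 [MOD 3])
    _ = d := by
      have := Fin.pos v
      rw [Nat.count_modEq_card _ three_pos]
      split_ifs <;> omega

end Gamma

theorem gamma_regular_and_monotone_general (d : ℕ) :
    (∀ v : Fin (3 * d - 1), ((Gamma d).neighborFinset v).card = d) ∧
    (∀ i : ℕ, 1 ≤ i → i ≤ d →
      ∃ f : Fin (3 * i - 1) → Fin (3 * d - 1), Function.Injective f ∧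
        ∀ a b : Fin (3 * i - 1), (Gamma i).Adj a b → (Gamma d).Adj (f a) (f b)) := by
  refine ⟨Gamma.card_neighborFinset, fun i _ hid => ?_⟩
  have hle : 3 * i - 1 ≤ 3 * d - 1 := by omega
  refine ⟨Fin.castLE hle, Fin.castLE_injective hle, fun a b hab => ?_⟩
  rwa [Gamma.eq_comap_castLE hle] at hab

/-- For every `d ≥ 1`, the graph `Γ_d` is `d`-regular, and for every `1 ≤ i ≤ d`,
`Γ_i` embeds into `Γ_d` as a subgraph. -/
theorem gamma_regular_and_monotone (d : ℕ) (hd : 1 ≤ d) :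
    (∀ v : Fin (3 * d - 1), ((Gamma d).neighborFinset v).card = d) ∧
    (∀ i : ℕ, 1 ≤ i → i ≤ d →
      ∃ f : Fin (3 * i - 1) → Fin (3 * d - 1), Function.Injective f ∧
        ∀ a b : Fin (3 * i - 1), (Gamma i).Adj a b → (Gamma d).Adj (f a) (f b)) :=
  gamma_regular_and_monotone_general d
end
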